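/- arXiv:1912.08912 — 2 statements merged into one kernel-verified Lean document; each statement's English description precedes it below -/
import Mathlib

section
/- Let inD : S → C → Prop, outO : C → A → Prop, CtrlDepend : S → D → Prop, bindingAD : A → D → Prop satisfy the diagram equality (∀ s a, (∃ c, inD s c ∧ outO c a) ↔ (∃ d, CtrlDepend s d ∧ bindingAD a d)). Suppose inD is functional, every sensor connected to a controller also controls some device (∀ s, (∃ c, inD s c) → ∃ d, CtrlDepend s d), and every controlled device is bound to some actuator (∀ s d, CtrlDepend s d → ∃ a, bindingAD a d). Then every controller in the range of inD is in the domain of outO, i.e. ∀ c, (∃ s, inD s c) → ∃ a, outO c a. -/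
theorem stmt_2 {S C A D : Type*}
    (inD : S → C → Prop) (outO : C → A → Prop)
    (CtrlDepend : S → D → Prop) (bindingAD : A → D → Prop)
    (hdiag : ∀ s a, (∃ c, inD s c ∧ outO c a) ↔ (∃ d, CtrlDepend s d ∧ bindingAD a d))
    (hfun : ∀ s c₁ c₂, inD s c₁ → inD s c₂ → c₁ = c₂)
    (hctrl : ∀ s, (∃ c, inD s c) → ∃ d, CtrlDepend s d)
    (hact : ∀ s d, CtrlDepend s d → ∃ a, bindingAD a d) :
    ∀ c, (∃ s, inD s c) → ∃ a, outO c a := by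
  rintro c ⟨s, hs⟩
  obtain ⟨d, hd⟩ := hctrl s ⟨c, hs⟩
  obtain ⟨a, ha⟩ := hact s d hd
  obtain ⟨c', hc', ho⟩ := (hdiag s a).mpr ⟨d, hd, ha⟩
  exact ⟨a, hfun s c' c hc' hs ▸ ho⟩
end

section
/- Let inD : S → C → Prop, outO : C → A → Prop, CtrlDepend : S → D → Prop, bindingAD : A → D → Prop satisfy the diagram equality. Suppose we extend the architecture with a new control dependency (s₀, d₀) where s₀ is linked to controller c₀ (inD s₀ c₀, and inD functional), and we simultaneously add to outO all pairs (c₀, a) for actuators a with bindingAD a d₀; call outO' the extended relation and CtrlDepend' := CtrlDepend ∪ {(s₀,d₀)}. If no other sensor shares the controller c₀ (∀ s, inD s c₀ → s = s₀), then the diagram equality still holds for inD, outO', CtrlDepend', bindingAD. -/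
theorem stmt_15 {S C A D : Type*}
    (inD : S → C → Prop) (outO : C → A → Prop)
    (CtrlDepend : S → D → Prop) (bindingAD : A → D → Prop)
    (hdiag : ∀ s a, (∃ c, inD s c ∧ outO c a) ↔ (∃ d, CtrlDepend s d ∧ bindingAD a d))
    (s₀ : S) (d₀ : D) (c₀ : C)
    (hc₀ : inD s₀ c₀)
    (hfun : ∀ s c₁ c₂, inD s c₁ → inD s c₂ → c₁ = c₂)
    (hded : ∀ s, inD s c₀ → s = s₀)
    (outO' : C → A → Prop)
    (houtO' : ∀ c a, outO' c a ↔ outO c a ∨ (c = c₀ ∧ bindingAD a d₀))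
    (CtrlDepend' : S → D → Prop)
    (hCD' : ∀ s d, CtrlDepend' s d ↔ CtrlDepend s d ∨ (s = s₀ ∧ d = d₀)) :
    ∀ s a, (∃ c, inD s c ∧ outO' c a) ↔ (∃ d, CtrlDepend' s d ∧ bindingAD a d) := by
  intro s a
  constructor
  · rintro ⟨c, hsc, hca⟩
    rcases (houtO' c a).1 hca with h | ⟨rfl, hb⟩
    · obtain ⟨d, hd, hb⟩ := (hdiag s a).1 ⟨c, hsc, h⟩
      exact ⟨d, (hCD' s d).2 (Or.inl hd), hb⟩
    · exact ⟨d₀, (hCD' s d₀).2 (Or.inr ⟨hded s hsc, rfl⟩), hb⟩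
  · rintro ⟨d, hd, hb⟩
    rcases (hCD' s d).1 hd with h | ⟨rfl, rfl⟩
    · obtain ⟨c, hsc, hca⟩ := (hdiag s a).2 ⟨d, h, hb⟩
      exact ⟨c, hsc, (houtO' c a).2 (Or.inl hca)⟩
    · exact ⟨c₀, hc₀, (houtO' c₀ a).2 (Or.inr ⟨rfl, hb⟩)⟩
end
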